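/- arXiv:1708.07888 — 2 statements merged into one kernel-verified Lean document; each statement's English description precedes it below -/
import Mathlib

section
/- Let τ ∈ ℝ, let V_A > 0, V_B > 0 and m_B ∈ ℝ. If p_ε(0, V_A) = τ and p_ε(m_B, V_B) ≥ τ, then V_A ≤ V_B; moreover, V_A = V_B holds if and only if m_B = 0 and p_ε(m_B, V_B) = τ. (This is Theorem 1 of the paper: a point on the estimated decision boundary, where the predictive mean is 0, lying on the isocontour p_ε = τ minimizes the predictive variance among all points with p_ε ≥ τ.) -/
/-- The cumulative distribution function of the standard Gaussian distribution `N(0,1)`. -/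
noncomputable def stdGaussianCDF : ℝ → ℝ :=
  fun x => ProbabilityTheory.cdf (ProbabilityTheory.gaussianReal 0 1) x

/-- The `ε`-margin probability of a point with predictive mean `m` and predictive
variance `V`: `p_ε(m, V) = Φ(-(|m| + ε)/√V)`. -/
noncomputable def epsMarginProb (ε m V : ℝ) : ℝ :=
  stdGaussianCDF (-(|m| + ε) / Real.sqrt V)

/-! A point with predictive mean `m` has margin probability `p_ε(m, V) ≤ p_ε(0, V)`, with equality
only when `m = 0`, and for `ε > 0` the map `V ↦ p_ε(0, V) = Φ(-ε/√V)` is strictly increasing.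
So `p_ε(0, V_A) = τ ≤ p_ε(m_B, V_B) ≤ p_ε(0, V_B)` forces `V_A ≤ V_B`, and equality of the
variances squeezes both inequalities into equalities. -/

open ProbabilityTheory MeasureTheory NNReal

theorem strictMono_cdf_gaussianReal (μ : ℝ) {v : ℝ≥0} (hv : v ≠ 0) :
    StrictMono (cdf (gaussianReal μ v)) := by
  intro a b hab
  have hpos : 0 < gaussianReal μ v (Set.Ioc a b) :=
    pos_iff_ne_zero.2 fun h => (Real.volume_Ioc ▸ ENNReal.ofReal_pos.2 (sub_pos.2 hab)).ne'
      (gaussianReal_absolutelyContinuous' μ hv h)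
  rw [← measure_cdf (gaussianReal μ v), StieltjesFunction.measure_Ioc, ENNReal.ofReal_pos] at hpos
  linarith

theorem stdGaussianCDF_strictMono : StrictMono stdGaussianCDF :=
  strictMono_cdf_gaussianReal 0 one_ne_zero

theorem epsMarginProb_le_epsMarginProb_zero (ε m V : ℝ) :
    epsMarginProb ε m V ≤ epsMarginProb ε 0 V := by
  refine stdGaussianCDF_strictMono.monotone (div_le_div_of_nonneg_right ?_ (Real.sqrt_nonneg V))
  simp

theorem epsMarginProb_eq_epsMarginProb_zero_iff (ε m : ℝ) {V : ℝ} (hV : 0 < V) :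
    epsMarginProb ε m V = epsMarginProb ε 0 V ↔ m = 0 := by
  rw [epsMarginProb, epsMarginProb, stdGaussianCDF_strictMono.injective.eq_iff,
    div_left_inj' (Real.sqrt_pos.2 hV).ne']
  simp

theorem strictMonoOn_epsMarginProb_zero {ε : ℝ} (hε : 0 < ε) :
    StrictMonoOn (epsMarginProb ε 0) (Set.Ioi 0) := by
  intro V hV W _ hVW
  refine stdGaussianCDF_strictMono ?_
  rw [abs_zero, zero_add, neg_div, neg_div, neg_lt_neg_iff]
  exact div_lt_div_of_pos_left hε (Real.sqrt_pos.2 hV) (Real.sqrt_lt_sqrt (le_of_lt hV) hVW)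

/-- Theorem 1 of the paper: a point on the estimated decision boundary (predictive mean `0`)
lying on the isocontour `p_ε = τ` minimizes the predictive variance among all points with
`p_ε ≥ τ`. -/
theorem exploitation_optimum_minimizes_variance
    (ε τ VA VB mB : ℝ) (hε : 0 < ε) (hVA : 0 < VA) (hVB : 0 < VB)
    (hA : epsMarginProb ε 0 VA = τ) (hB : τ ≤ epsMarginProb ε mB VB) :
    VA ≤ VB ∧ (VA = VB ↔ (mB = 0 ∧ epsMarginProb ε mB VB = τ)) := by
  have hmono := strictMonoOn_epsMarginProb_zero hε
  have hAB : epsMarginProb ε 0 VA ≤ epsMarginProb ε 0 VB :=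
    hA ▸ hB.trans (epsMarginProb_le_epsMarginProb_zero ε mB VB)
  refine ⟨(hmono.le_iff_le hVA hVB).1 hAB, ⟨?_, ?_⟩⟩
  · rintro rfl
    have hmB : mB = 0 := (epsMarginProb_eq_epsMarginProb_zero_iff ε mB hVA).1
      (le_antisymm (epsMarginProb_le_epsMarginProb_zero ε mB VA) (hA ▸ hB))
    exact ⟨hmB, hmB ▸ hA⟩
  · rintro ⟨rfl, hτ⟩
    exact hmono.injOn hVA hVB (hA.trans hτ.symm)
end

section
/- Let m ∈ ℝ, V > 0, and let P be the Gaussian probability measure on ℝ with mean m and variance V. Let s ∈ {−1, 1} be such that s·m = |m|, define the misclassification loss L(x) = max(0, −s·x), and let ε > 0 and τ ∈ ℝ. If Φ(−(|m| + ε)/√V) ≤ τ, then P({x ∈ ℝ : L(x) ≤ ε}) ≥ 1 − τ. (This is the accuracy guarantee, Eq. 10 of the paper: at any point of the explored region, where p_ε(x) ≤ τ, the misclassification loss is at most ε with probability at least 1 − τ.) -/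
open MeasureTheory ProbabilityTheory Set

/-- Eq. 10 of the paper (the accuracy guarantee): if the latent value has Gaussian
posterior with mean `m` and variance `V`, `s ∈ {−1, 1}` agrees with the sign of `m`,
the misclassification loss is `L(x) = max(0, −s·x)`, and the `ε`-margin probability
satisfies `Φ(−(|m| + ε)/√V) ≤ τ`, then the misclassification loss is at most `ε` with
probability at least `1 − τ`. -/
theorem explored_region_accuracy_guarantee
    (m V s ε τ : ℝ) (hV : 0 < V) (hs : s = -1 ∨ s = 1) (hsm : s * m = |m|)
    (hε : 0 < ε)
    (h : stdGaussianCDF (-(|m| + ε) / Real.sqrt V) ≤ τ) :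
    1 - τ ≤
      (ProbabilityTheory.gaussianReal m V.toNNReal
        {x : ℝ | max 0 (-(s * x)) ≤ ε}).toReal := by
  have hsV : (0:ℝ) < Real.sqrt V := Real.sqrt_pos.mpr hV
  simp only [stdGaussianCDF] at h
  set a : ℝ := -(|m| + ε) / Real.sqrt V with ha
  -- step 1: rewrite the set
  have hset : {x : ℝ | max 0 (-(s * x)) ≤ ε} = (s * ·) ⁻¹' Ici (-ε) := by
    ext x
    simp only [mem_setOf_eq, mem_preimage, mem_Ici, max_le_iff, neg_le]
    constructor
    · rintro ⟨_, h2⟩; linarith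
    · intro h2; exact ⟨hε.le, by linarith⟩
  -- step 2: map by s
  have hmap : (gaussianReal m V.toNNReal).map (s * ·) = gaussianReal |m| V.toNNReal := by
    rw [gaussianReal_map_const_mul, hsm]
    congr 1
    rcases hs with rfl | rfl <;> · ext; norm_num
  -- step 3: standardize
  have hstd : gaussianReal |m| V.toNNReal
      = (gaussianReal 0 1).map (fun x => Real.sqrt V * x + |m|) := by
    have h1 : (gaussianReal 0 1).map (Real.sqrt V * ·) = gaussianReal 0 V.toNNReal := by
      rw [gaussianReal_map_const_mul]
      congr 1
      · ring
      · ext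
        simp [Real.sq_sqrt hV.le, Real.coe_toNNReal', max_eq_left hV.le]
    have h2 : ((gaussianReal 0 V.toNNReal).map (· + |m|)) = gaussianReal |m| V.toNNReal := by
      rw [gaussianReal_map_add_const]; congr 1; ring
    rw [← h2, ← h1, Measure.map_map (by fun_prop) (by fun_prop)]
    rfl
  have hpre : (fun x => Real.sqrt V * x + |m|) ⁻¹' Ici (-ε) = Ici a := by
    ext x
    simp only [mem_preimage, mem_Ici, ha]
    rw [div_le_iff₀ hsV]
    constructor <;> intro hx <;> nlinarith
  have key : (gaussianReal m V.toNNReal) {x : ℝ | max 0 (-(s * x)) ≤ ε}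
      = (gaussianReal 0 1) (Ici a) := by
    rw [hset, ← Measure.map_apply (by fun_prop) measurableSet_Ici, hmap, hstd,
      Measure.map_apply (by fun_prop) measurableSet_Ici, hpre]
  rw [key]
  have hcompl : (gaussianReal 0 1) (Ici a) = 1 - (gaussianReal 0 1) (Iio a) := by
    rw [← compl_Iio, prob_compl_eq_one_sub measurableSet_Iio]
  have hle : (gaussianReal 0 1) (Iio a) ≤ ENNReal.ofReal τ := by
    calc (gaussianReal 0 1) (Iio a) ≤ (gaussianReal 0 1) (Iic a) :=
          measure_mono Iio_subset_Iic_self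
      _ = ENNReal.ofReal (cdf (gaussianReal 0 1) a) := (ofReal_cdf _ a).symm
      _ ≤ ENNReal.ofReal τ := ENNReal.ofReal_le_ofReal h
  have hfin : (gaussianReal 0 1) (Iio a) ≤ 1 := prob_le_one
  rw [hcompl, ENNReal.toReal_sub_of_le hfin ENNReal.one_ne_top]
  have : ((gaussianReal 0 1) (Iio a)).toReal ≤ τ := by
    have := ENNReal.toReal_mono ENNReal.ofReal_ne_top hle
    rw [ENNReal.toReal_ofReal (le_trans (cdf_nonneg (gaussianReal 0 1) a) h)] at this
    exact this
  simp only [ENNReal.toReal_one]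
  linarith
end
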